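/- Let A generate a strongly continuous semigroup T = (T(t))_{t≥0} on X such that T(t) is right-invertible in L(X) for some (equivalently each) t > 0, and let C: X_1 → Y be an observation operator such that there exists c > 0 with the property that every classical solution (u,x,y) of the system node Σ(A, 𝕀, C, C(·−A)^{-1}) with x(0) = 0 satisfies ‖y‖_{L^∞([0,T],Y)} ≤ c ‖u‖_{L^∞([0,T],X)} for all T > 0. Then C extends to a bounded operator from X to Y. -/

import Mathlib

/-- A bundled complex Banach space (declared before `open MeasureTheory`, whose
notations interfere with instance-binder fields in structures). -/
structure CplxBanach where
  carrier : Type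
  [nacg : NormedAddCommGroup carrier]
  [nsp : NormedSpace ℂ carrier]
  [cs : CompleteSpace carrier]

attribute [instance] CplxBanach.nacg CplxBanach.nsp CplxBanach.cs

/-- A bundled complex Hilbert space. -/
structure CplxHilbert where
  carrier : Type
  [nacg : NormedAddCommGroup carrier]
  [ips : InnerProductSpace ℂ carrier]
  [cs : CompleteSpace carrier]

attribute [instance] CplxHilbert.nacg CplxHilbert.ips CplxHilbert.cs

open MeasureTheory Set
open scoped ENNReal NNReal Topology

noncomputable section

/-- A strongly continuous semigroup of bounded linear operators on a complex Banach space. -/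
structure C0Semigroup (X : Type*) [NormedAddCommGroup X] [NormedSpace ℂ X] where
  T : ℝ → X →L[ℂ] X
  map_zero : T 0 = ContinuousLinearMap.id ℂ X
  map_add : ∀ s t : ℝ, 0 ≤ s → 0 ≤ t → T (s + t) = (T s).comp (T t)
  strongly_continuous : ∀ x : X, ContinuousOn (fun t => T t x) (Set.Ici 0)

namespace C0Semigroup

variable {X : Type*} [NormedAddCommGroup X] [NormedSpace ℂ X]

/-- The growth bound `ω(T)` of a strongly continuous semigroup. -/
def growthBound (S : C0Semigroup X) : ℝ :=
  sInf {w : ℝ | ∃ M : ℝ, ∀ t : ℝ, 0 ≤ t → ‖S.T t‖ ≤ M * Real.exp (w * t)}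

/-- Exponential stability of a strongly continuous semigroup. -/
def ExpStable (S : C0Semigroup X) : Prop :=
  ∃ ε : ℝ, 0 < ε ∧ ∃ M : ℝ, ∀ t : ℝ, 0 ≤ t → ‖S.T t‖ ≤ M * Real.exp (-ε * t)

/-- The semigroup is analytic: it extends analytically to an open sector around the
positive real axis, the extension satisfying the semigroup property on the sector. -/
def IsAnalytic (S : C0Semigroup X) : Prop :=
  ∃ θ : ℝ, θ ∈ Set.Ioo 0 (Real.pi / 2) ∧ ∃ F : ℂ → X →L[ℂ] X,
    DifferentiableOn ℂ F {z : ℂ | z ≠ 0 ∧ |Complex.arg z| < θ} ∧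
    (∀ t : ℝ, 0 < t → F t = S.T t) ∧
    (∀ z w : ℂ, (z ≠ 0 ∧ |Complex.arg z| < θ) → (w ≠ 0 ∧ |Complex.arg w| < θ) →
      F (z + w) = (F z).comp (F w))

/-- The fractional power `(-A)^{-γ}` of the negative generator of an exponentially
stable semigroup, defined through the standard integral formula
`(-A)^{-γ} = Γ(γ)⁻¹ ∫_0^∞ t^{γ-1} T(t) dt` (and the identity for `γ = 0`). -/
def negAPow (S : C0Semigroup X) (γ : ℝ) : X →L[ℂ] X :=
  if γ = 0 then ContinuousLinearMap.id ℂ X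
  else (Real.Gamma γ)⁻¹ • ∫ t in Set.Ioi (0:ℝ), t ^ (γ - 1) • S.T t

end C0Semigroup

/-- A system node `Σ(A,B,C,G)` on the Banach spaces `(U, X, Y)`, in the sense of Staffans.
The extrapolation space `X_{-1}` is given as the space `Xm1` together with a dense
continuous embedding `ι : X → X_{-1}`; `Am1 : X → X_{-1}` is the extension
`A_{-1}` of the generator restricted to `X` (which is bounded from `X` to `X_{-1}`);
the domain of `A` is the set of `x ∈ X` with `A_{-1} x ∈ X`.  `R s` is the resolvent
`(s - A_{-1})^{-1} : X_{-1} → X`, defined (as specified by `R_right`, `R_left`) for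
`Re s > ω(T)`.  `B : U → X_{-1}` is the control operator and `Cop` is the observation
operator `C : X_1 → Y`, encoded as a map on all of `X` that is linear and
`X_1`-bounded on the domain of `A`.  `G` is the transfer function. -/
structure SystemNode (U : Type*) (X : Type*) (Xm1 : Type*) (Y : Type*)
    [NormedAddCommGroup U] [NormedSpace ℂ U]
    [NormedAddCommGroup X] [NormedSpace ℂ X]
    [NormedAddCommGroup Xm1] [NormedSpace ℂ Xm1]
    [NormedAddCommGroup Y] [NormedSpace ℂ Y] where
  S : C0Semigroup X
  Sm1 : C0Semigroup Xm1
  ι : X →L[ℂ] Xm1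
  ι_injective : Function.Injective (fun x : X => ι x)
  ι_dense : DenseRange (fun x : X => ι x)
  semigroup_compat : ∀ t : ℝ, 0 ≤ t → ∀ x : X, Sm1.T t (ι x) = ι (S.T t x)
  Am1 : X →L[ℂ] Xm1
  generator : ∀ x : X, ∀ t : ℝ, 0 ≤ t →
    HasDerivWithinAt (fun τ : ℝ => ι (S.T τ x)) (Am1 (S.T t x)) (Set.Ici 0) t
  B : U →L[ℂ] Xm1
  Cop : X → Y
  Cop_add : ∀ x₁ x₂ : X, (∃ z : X, Am1 x₁ = ι z) → (∃ z : X, Am1 x₂ = ι z) →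
    Cop (x₁ + x₂) = Cop x₁ + Cop x₂
  Cop_smul : ∀ (a : ℂ) (x : X), (∃ z : X, Am1 x = ι z) → Cop (a • x) = a • Cop x
  Cop_bound : ∃ M : ℝ, ∀ x z : X, Am1 x = ι z → ‖Cop x‖ ≤ M * (‖x‖ + ‖z‖)
  R : ℂ → Xm1 →L[ℂ] X
  R_right : ∀ s : ℂ, S.growthBound < s.re → ∀ w : Xm1, s • ι (R s w) - Am1 (R s w) = w
  R_left : ∀ s : ℂ, S.growthBound < s.re → ∀ x : X, R s (s • ι x - Am1 x) = x
  G : ℂ → U →L[ℂ] Y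
  G_analytic : DifferentiableOn ℂ (fun s => G s) {s : ℂ | S.growthBound < s.re}
  G_shift : ∀ α β : ℂ, S.growthBound < α.re → S.growthBound < β.re → ∀ u : U,
    G α u - G β u = Cop (R α (B u) - R β (B u))

namespace SystemNode

variable {U X Xm1 Y : Type*}
  [NormedAddCommGroup U] [NormedSpace ℂ U]
  [NormedAddCommGroup X] [NormedSpace ℂ X]
  [NormedAddCommGroup Xm1] [NormedSpace ℂ Xm1]
  [NormedAddCommGroup Y] [NormedSpace ℂ Y]

/-- The domain of the generator `A`: those `x ∈ X` with `A_{-1} x ∈ X`. -/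
def domA (sys : SystemNode U X Xm1 Y) : Set X := {x : X | ∃ z : X, sys.Am1 x = sys.ι z}

/-- A fixed point in the half-plane of analyticity of the transfer function. -/
def betaPt (sys : SystemNode U X Xm1 Y) : ℂ := ((sys.S.growthBound + 1 : ℝ) : ℂ)

/-- The combined observation/feedthrough operator
`C&D (x,u) = C[x - (β - A)⁻¹ B u] + G(β) u`. -/
def CD (sys : SystemNode U X Xm1 Y) (x : X) (u : U) : Y :=
  sys.Cop (x - sys.R sys.betaPt (sys.B u)) + sys.G sys.betaPt u

/-- The pair `(x,u)` belongs to the domain of the combined operator `C&D`,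
i.e. `A_{-1} x + B u ∈ X`. -/
def memCD (sys : SystemNode U X Xm1 Y) (x : X) (u : U) : Prop :=
  ∃ z : X, sys.Am1 x + sys.B u = sys.ι z

/-- A classical solution `(u,x,y)` of the system node on `[0,∞)`:
`u, y` continuous, `x` continuously differentiable with
`ẋ(t) = A x(t) + B u(t)` (in particular `(x(t),u(t)) ∈ D(C&D)`) and
`y(t) = C&D (x(t),u(t))` for all `t ≥ 0`. -/
def IsClassicalSolution (sys : SystemNode U X Xm1 Y)
    (u : ℝ → U) (x : ℝ → X) (y : ℝ → Y) : Prop :=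
  ContinuousOn u (Set.Ici 0) ∧ ContinuousOn y (Set.Ici 0) ∧
  (∃ x' : ℝ → X, ContinuousOn x' (Set.Ici 0) ∧
    (∀ t ∈ Set.Ici (0:ℝ), HasDerivWithinAt x (x' t) (Set.Ici 0) t) ∧
    (∀ t ∈ Set.Ici (0:ℝ), sys.Am1 (x t) + sys.B (u t) = sys.ι (x' t))) ∧
  (∀ t ∈ Set.Ici (0:ℝ), y t = sys.CD (x t) (u t))

/-- `C^∞`-BIBO stability: there is `c > 0` such that every classical solution with
zero initial state and smooth input compactly supported in `(0,∞)` has output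
bounded by `c` times the sup-norm of the input. -/
def CInfBIBOStable (sys : SystemNode U X Xm1 Y) : Prop :=
  ∃ c : ℝ, 0 < c ∧ ∀ (u : ℝ → U) (x : ℝ → X) (y : ℝ → Y),
    sys.IsClassicalSolution u x y → x 0 = 0 →
    ContDiff ℝ (⊤ : ℕ∞) u → HasCompactSupport u → tsupport u ⊆ Set.Ioi 0 →
    ∀ M : ℝ, (∀ s : ℝ, ‖u s‖ ≤ M) → ∀ t : ℝ, 0 ≤ t → ‖y t‖ ≤ c * M

/-- The state part of a generalised solution in the distributional sense:
`u ∈ L¹_loc`, `x` continuous `X_{-1}`-valued, given by the variation of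
constants formula with initial state `x₀ ∈ X`. -/
def IsMildState (sys : SystemNode U X Xm1 Y) (x₀ : X) (u : ℝ → U) (xs : ℝ → Xm1) : Prop :=
  MeasureTheory.LocallyIntegrableOn u (Set.Ici 0) ∧
  ContinuousOn xs (Set.Ici 0) ∧
  ∀ t : ℝ, 0 ≤ t →
    IntervalIntegrable (fun s => sys.Sm1.T (t - s) (sys.B (u s))) MeasureTheory.volume 0 t ∧
    xs t = sys.Sm1.T t (sys.ι x₀) + ∫ s in (0:ℝ)..t, sys.Sm1.T (t - s) (sys.B (u s))

/-- The output part of a generalised solution in the distributional sense: the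
(locally integrable representative of the) `Y`-valued distribution
`y = d²/dt² ( C&D ∫_0^t (t-s) (x(s), u(s)) ds )`. -/
def IsGenOutput (sys : SystemNode U X Xm1 Y) (u : ℝ → U) (xs : ℝ → Xm1) (y : ℝ → Y) : Prop :=
  MeasureTheory.LocallyIntegrableOn y (Set.Ici 0) ∧
  ∃ (K : ℝ → X) (L : ℝ → U),
    (∀ t : ℝ, 0 ≤ t → sys.ι (K t) = ∫ s in (0:ℝ)..t, (t - s) • xs s) ∧
    (∀ t : ℝ, 0 ≤ t → L t = ∫ s in (0:ℝ)..t, (t - s) • u s) ∧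
    (∀ t : ℝ, 0 ≤ t → sys.memCD (K t) (L t)) ∧
    (∀ φ : ℝ → ℝ, ContDiff ℝ (⊤ : ℕ∞) φ → HasCompactSupport φ → tsupport φ ⊆ Set.Ioi 0 →
      ∫ t in Set.Ioi (0:ℝ), deriv (deriv φ) t • sys.CD (K t) (L t) =
        ∫ t in Set.Ioi (0:ℝ), φ t • y t)

/-- A generalised solution in the distributional sense. -/
def IsGeneralizedSolution (sys : SystemNode U X Xm1 Y) (x₀ : X)
    (u : ℝ → U) (xs : ℝ → Xm1) (y : ℝ → Y) : Prop :=
  sys.IsMildState x₀ u xs ∧ sys.IsGenOutput u xs y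

/-- `L^∞`-BIBO stability: there is `c > 0` such that for every generalised solution in
the distributional sense with zero initial state and locally essentially bounded input,
the output is represented by a locally essentially bounded function with
`‖y‖_{L^∞([0,t])} ≤ c ‖u‖_{L^∞([0,t])}` for all `t > 0`. -/
def LInfBIBOStable (sys : SystemNode U X Xm1 Y) : Prop :=
  ∃ c : ℝ, 0 < c ∧ ∀ (u : ℝ → U) (xs : ℝ → Xm1),
    sys.IsMildState 0 u xs →
    (∀ t : ℝ, 0 < t → ∃ M : ℝ,
      ∀ᵐ s ∂(MeasureTheory.volume.restrict (Set.Ioc (0:ℝ) t)), ‖u s‖ ≤ M) →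
    ∃ y : ℝ → Y, sys.IsGenOutput u xs y ∧
      ∀ t : ℝ, 0 < t → ∀ M : ℝ,
        (∀ᵐ s ∂(MeasureTheory.volume.restrict (Set.Ioc (0:ℝ) t)), ‖u s‖ ≤ M) →
        (∀ᵐ s ∂(MeasureTheory.volume.restrict (Set.Ioc (0:ℝ) t)), ‖y s‖ ≤ c * M)

/-- `L^p`-control-admissibility of the control operator `B`. -/
def ControlAdmissible (sys : SystemNode U X Xm1 Y) (p : ℝ≥0∞) : Prop :=
  ∀ t : ℝ, 0 < t → ∃ M : ℝ, ∀ u : ℝ → U,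
    IntervalIntegrable (fun s => sys.Sm1.T (t - s) (sys.B (u s))) MeasureTheory.volume 0 t →
    ∃ x : X, sys.ι x = ∫ s in (0:ℝ)..t, sys.Sm1.T (t - s) (sys.B (u s)) ∧
      ‖x‖ ≤ M * (eLpNorm u p (MeasureTheory.volume.restrict (Set.Ioc (0:ℝ) t))).toReal

/-- Infinite-time `L^p`-control-admissibility: the admissibility constant can be chosen
uniformly in `t`. -/
def InfTimeControlAdmissible (sys : SystemNode U X Xm1 Y) (p : ℝ≥0∞) : Prop :=
  ∃ M : ℝ, ∀ t : ℝ, 0 < t → ∀ u : ℝ → U,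
    IntervalIntegrable (fun s => sys.Sm1.T (t - s) (sys.B (u s))) MeasureTheory.volume 0 t →
    ∃ x : X, sys.ι x = ∫ s in (0:ℝ)..t, sys.Sm1.T (t - s) (sys.B (u s)) ∧
      ‖x‖ ≤ M * (eLpNorm u p (MeasureTheory.volume.restrict (Set.Ioc (0:ℝ) t))).toReal

/-- `L^p`-observation-admissibility of the observation operator `C`. -/
def ObservationAdmissible (sys : SystemNode U X Xm1 Y) (p : ℝ≥0∞) : Prop :=
  ∃ t : ℝ, 0 < t ∧ ∃ M : ℝ, ∀ x z : X, sys.Am1 x = sys.ι z →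
    (eLpNorm (fun s : ℝ => sys.Cop (sys.S.T s x)) p
      (MeasureTheory.volume.restrict (Set.Ioc (0:ℝ) t))).toReal ≤ M * ‖x‖

/-- `L²`-well-posedness of a system node: `B` and `C` are `L²`-admissible and the
transfer function is bounded on some right half-plane. -/
def L2WellPosed (sys : SystemNode U X Xm1 Y) : Prop :=
  sys.ControlAdmissible 2 ∧ sys.ObservationAdmissible 2 ∧
  ∃ w : ℝ, sys.S.growthBound ≤ w ∧ ∃ M : ℝ, ∀ s : ℂ, w < s.re → ‖sys.G s‖ ≤ M

end SystemNode

/-- A (matrix/operator valued) Borel measure of bounded total variation on `[0,∞)`,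
encoded through its polar decomposition: a finite positive measure `μ` supported on
`[0,∞)` together with a density `g` of norm one. -/
structure BVMeasure (U Y : Type*) [NormedAddCommGroup U] [NormedSpace ℂ U]
    [NormedAddCommGroup Y] [NormedSpace ℂ Y] where
  μ : MeasureTheory.Measure ℝ
  finite : MeasureTheory.IsFiniteMeasure μ
  supported : μ (Set.Iio 0) = 0
  g : ℝ → U →L[ℂ] Y
  g_meas : MeasureTheory.AEStronglyMeasurable g μ
  g_norm : ∀ᵐ t ∂μ, ‖g t‖ = 1

namespace BVMeasure

variable {U Y : Type*} [NormedAddCommGroup U] [NormedSpace ℂ U]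
  [NormedAddCommGroup Y] [NormedSpace ℂ Y]

/-- The total variation `‖h‖_M` of the measure. -/
def var (h : BVMeasure U Y) : ℝ := (h.μ Set.univ).toReal

/-- The Laplace transform `ĥ(s) u = ∫ e^{-st} dh(t) u`. -/
def laplace (h : BVMeasure U Y) (s : ℂ) (u : U) : Y :=
  ∫ t, Complex.exp (-(s * t)) • (h.g t u) ∂h.μ

/-- The convolution `(h ∗ u)(t) = ∫_{[0,t]} dh(s) u(t - s)`. -/
def conv (h : BVMeasure U Y) (u : ℝ → U) (t : ℝ) : Y :=
  ∫ s in Set.Icc 0 t, (h.g s) (u (t - s)) ∂h.μ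

end BVMeasure

/-- The Laplace transform of `h` coincides with the transfer function of the node on
the half-plane `ℂ_{ω(T)}` (on `ℂ_{ω(T)} ∩ ℂ_0`, identifying `ĥ` with its analytic
continuation). -/
def LaplaceMatches {U X Xm1 Y : Type*}
    [NormedAddCommGroup U] [NormedSpace ℂ U]
    [NormedAddCommGroup X] [NormedSpace ℂ X]
    [NormedAddCommGroup Xm1] [NormedSpace ℂ Xm1]
    [NormedAddCommGroup Y] [NormedSpace ℂ Y]
    (sys : SystemNode U X Xm1 Y) (h : BVMeasure U Y) : Prop :=
  ∀ s : ℂ, sys.S.growthBound < s.re → 0 ≤ s.re → ∀ u : U, h.laplace s u = sys.G s u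

/-- `sys'` is a system node for the multiplicatively perturbed triple `(AP, B, C)`. -/
def IsMultPerturbed {U X Xm1 Y : Type*}
    [NormedAddCommGroup U] [NormedSpace ℂ U]
    [NormedAddCommGroup X] [NormedSpace ℂ X]
    [NormedAddCommGroup Xm1] [NormedSpace ℂ Xm1]
    [NormedAddCommGroup Y] [NormedSpace ℂ Y]
    (sys sys' : SystemNode U X Xm1 Y) (P : X →L[ℂ] X) : Prop :=
  sys'.ι = sys.ι ∧ sys'.Am1 = sys.Am1.comp P ∧ sys'.B = sys.B ∧ sys'.Cop = sys.Cop

/-- `sys'` is a system node for the additively perturbed triple `(A + P, B, C)`. -/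
def IsAddPerturbed {U X Xm1 Y : Type*}
    [NormedAddCommGroup U] [NormedSpace ℂ U]
    [NormedAddCommGroup X] [NormedSpace ℂ X]
    [NormedAddCommGroup Xm1] [NormedSpace ℂ Xm1]
    [NormedAddCommGroup Y] [NormedSpace ℂ Y]
    (sys sys' : SystemNode U X Xm1 Y) (P : X →L[ℂ] X) : Prop :=
  sys'.ι = sys.ι ∧ sys'.Am1 = sys.Am1 + sys.ι.comp P ∧ sys'.B = sys.B ∧ sys'.Cop = sys.Cop

end

namespace BIBO16

open MeasureTheory Set Filter

noncomputable section

set_option linter.unusedSectionVars false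

variable {X Xm1 Y : Type*}
    [NormedAddCommGroup X] [NormedSpace ℂ X] [CompleteSpace X]
    [NormedAddCommGroup Xm1] [NormedSpace ℂ Xm1] [CompleteSpace Xm1]
    [NormedAddCommGroup Y] [NormedSpace ℂ Y] [CompleteSpace Y]
    (sys : SystemNode X X Xm1 Y)

/-- The semigroup, extended by `T(0)` to negative times. -/
def Tn (t : ℝ) : X →L[ℂ] X := sys.S.T (max t 0)

lemma Tn_of_nonneg {t : ℝ} (ht : 0 ≤ t) : Tn sys t = sys.S.T t := by
  rw [Tn, max_eq_left ht]

lemma Tn_zero (v : X) : Tn sys 0 v = v := by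
  simp [Tn, sys.S.map_zero]

lemma Tn_cont (v : X) : Continuous fun t => Tn sys t v := by
  have h : (fun t => Tn sys t v) = (fun s => sys.S.T s v) ∘ (fun t => max t 0) := rfl
  rw [h]
  exact (sys.S.strongly_continuous v).comp_continuous
    (continuous_id.max continuous_const) (fun t => Set.mem_Ici.mpr (le_max_right _ _))

lemma generator' (v : X) {t : ℝ} (ht : 0 ≤ t) :
    HasDerivWithinAt (fun τ : ℝ => sys.ι (Tn sys τ v)) (sys.Am1 (Tn sys t v)) (Ici 0) t := by
  have h := sys.generator v t ht
  rw [Tn_of_nonneg sys ht]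
  exact h.congr (fun τ hτ => by rw [Tn_of_nonneg sys hτ]) (by rw [Tn_of_nonneg sys ht])

lemma commute_aux {z w : X} (hzw : sys.Am1 z = sys.ι w) {t : ℝ} (ht : 0 ≤ t) :
    sys.Am1 (sys.S.T t z) = sys.ι (sys.S.T t w) := by
  have hu : UniqueDiffWithinAt ℝ (Ici (0:ℝ)) 0 := uniqueDiffOn_Ici 0 0 self_mem_Ici
  have h0 : HasDerivWithinAt (fun σ : ℝ => sys.ι (sys.S.T σ z)) (sys.Am1 z) (Ici 0) 0 := by
    have h := sys.generator z 0 le_rfl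
    rwa [sys.S.map_zero, ContinuousLinearMap.id_apply] at h
  have hg : HasDerivWithinAt (fun σ : ℝ => sys.Sm1.T t (sys.ι (sys.S.T σ z)))
      (sys.Sm1.T t (sys.Am1 z)) (Ici 0) 0 := by
    simpa [Function.comp_def] using ((sys.Sm1.T t).restrictScalars ℝ).hasFDerivAt.comp_hasDerivWithinAt 0 h0
  have heq : ∀ σ ∈ Ici (0:ℝ), sys.Sm1.T t (sys.ι (sys.S.T σ z)) = sys.ι (sys.S.T (t + σ) z) := by
    intro σ hσ
    rw [sys.semigroup_compat t ht, sys.S.map_add t σ ht hσ]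
    rfl
  have hf : HasDerivWithinAt (fun σ : ℝ => sys.ι (sys.S.T (t + σ) z))
      (sys.Am1 (sys.S.T t z)) (Ici 0) 0 := by
    have hgen : HasDerivWithinAt (fun τ : ℝ => sys.ι (sys.S.T τ z))
        (sys.Am1 (sys.S.T t z)) (Ici 0) ((fun σ : ℝ => t + σ) 0) := by
      simpa using sys.generator z t ht
    have hh : HasDerivWithinAt (fun σ : ℝ => t + σ) 1 (Ici (0:ℝ)) 0 :=
      ((hasDerivAt_id (0:ℝ)).const_add t).hasDerivWithinAt
    have hmaps : MapsTo (fun σ : ℝ => t + σ) (Ici (0:ℝ)) (Ici (0:ℝ)) :=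
      fun σ hσ => add_nonneg ht hσ
    simpa [Function.comp_def] using HasDerivWithinAt.scomp (0:ℝ) hgen hh hmaps
  have hf' : HasDerivWithinAt (fun σ : ℝ => sys.Sm1.T t (sys.ι (sys.S.T σ z)))
      (sys.Am1 (sys.S.T t z)) (Ici 0) 0 :=
    hf.congr (fun σ hσ => heq σ hσ) (heq 0 self_mem_Ici)
  have h1 := hf'.derivWithin hu
  have h2 := hg.derivWithin hu
  rw [← h1, h2, hzw, sys.semigroup_compat t ht]

lemma commute {z w : X} (hzw : sys.Am1 z = sys.ι w) (t : ℝ) :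
    sys.Am1 (Tn sys t z) = sys.ι (Tn sys t w) :=
  commute_aux sys hzw (le_max_right t 0)

lemma ftc_gen (v : X) {t : ℝ} (ht : 0 ≤ t) :
    ∫ s in (0:ℝ)..t, sys.Am1 (Tn sys s v) = sys.ι (Tn sys t v) - sys.ι v := by
  have h := intervalIntegral.integral_eq_sub_of_hasDeriv_right_of_le ht
    (f := fun τ : ℝ => sys.ι (Tn sys τ v)) (f' := fun s : ℝ => sys.Am1 (Tn sys s v))
    ((sys.ι.continuous.comp (Tn_cont sys v)).continuousOn)
    (fun σ hσ => ((generator' sys v hσ.1.le).mono (fun y hy => hσ.1.le.trans hy.le)))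
    ((sys.Am1.continuous.comp (Tn_cont sys v)).intervalIntegrable 0 t)
  rw [h]
  show sys.ι (Tn sys t v) - sys.ι (Tn sys 0 v) = _
  rw [Tn_zero]

/-- `∫_0^t T(s) v ds`. -/
def Jint (t : ℝ) (v : X) : X := ∫ s in (0:ℝ)..t, Tn sys s v

lemma Am1_Jint (v : X) {t : ℝ} (ht : 0 ≤ t) :
    sys.Am1 (Jint sys t v) = sys.ι (Tn sys t v - v) := by
  rw [Jint, ← sys.Am1.intervalIntegral_comp_comm ((Tn_cont sys v).intervalIntegrable 0 t),
    ftc_gen sys v ht, map_sub]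

lemma Tz_eq {z w : X} (hzw : sys.Am1 z = sys.ι w) {t : ℝ} (ht : 0 ≤ t) :
    Tn sys t z = z + Jint sys t w := by
  apply sys.ι_injective
  show sys.ι _ = sys.ι _
  have h1 : sys.ι (Jint sys t w) = ∫ s in (0:ℝ)..t, sys.ι (Tn sys s w) :=
    (sys.ι.intervalIntegral_comp_comm ((Tn_cont sys w).intervalIntegrable 0 t)).symm
  have h2 : (∫ s in (0:ℝ)..t, sys.ι (Tn sys s w)) = sys.ι (Tn sys t z) - sys.ι z := by
    rw [← ftc_gen sys z ht]
    exact intervalIntegral.integral_congr (fun s _ => (commute sys hzw s).symm)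
  rw [map_add, h1, h2]
  abel

lemma derivT {z w : X} (hzw : sys.Am1 z = sys.ι w) {t : ℝ} (ht : 0 ≤ t) :
    HasDerivWithinAt (fun τ : ℝ => Tn sys τ z) (Tn sys t w) (Ici 0) t := by
  have hd : HasDerivAt (fun τ : ℝ => z + ∫ s in (0:ℝ)..τ, Tn sys s w) (Tn sys t w) t := by
    refine HasDerivAt.const_add z ?_
    exact intervalIntegral.integral_hasDerivAt_right
      ((Tn_cont sys w).intervalIntegrable 0 t)
      ((Tn_cont sys w).stronglyMeasurableAtFilter volume (nhds t))
      (Tn_cont sys w).continuousAt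
  exact hd.hasDerivWithinAt.congr
    (fun τ hτ => Tz_eq sys hzw hτ) (Tz_eq sys hzw ht)

lemma avg_tendsto (v : X) :
    Tendsto (fun τ : ℝ => τ⁻¹ • Jint sys τ v) (nhdsWithin 0 (Ioi 0)) (nhds v) := by
  rw [Metric.tendsto_nhdsWithin_nhds]
  intro ε hε
  obtain ⟨δ, hδ, hδ'⟩ := Metric.continuousAt_iff.mp (Tn_cont sys v).continuousAt (ε/2)
    (half_pos hε)
  refine ⟨δ, hδ, ?_⟩
  intro τ hτ hτδ
  have hτ0 : (0:ℝ) < τ := hτ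
  have hint : IntervalIntegrable (fun s => Tn sys s v) volume 0 τ :=
    (Tn_cont sys v).intervalIntegrable 0 τ
  have hsub : Jint sys τ v - τ • v = ∫ s in (0:ℝ)..τ, (Tn sys s v - v) := by
    rw [intervalIntegral.integral_sub hint (intervalIntegrable_const),
      intervalIntegral.integral_const, Jint]
    simp
  have hbound : ‖Jint sys τ v - τ • v‖ ≤ ε/2 * |τ - 0| := by
    rw [hsub]
    refine intervalIntegral.norm_integral_le_of_norm_le_const ?_
    intro s hs
    rw [Set.uIoc_of_le hτ0.le] at hs
    have : dist s 0 < δ := by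
      rw [Real.dist_eq, sub_zero, abs_of_pos hs.1]
      exact lt_of_le_of_lt hs.2 (by rwa [Real.dist_eq, sub_zero, abs_of_pos hτ0] at hτδ)
    have h2 := hδ' this
    rw [Tn_zero] at h2
    exact le_of_lt (by rwa [dist_eq_norm] at h2)
  rw [dist_eq_norm]
  have key : τ⁻¹ • Jint sys τ v - v = τ⁻¹ • (Jint sys τ v - τ • v) := by
    rw [smul_sub, smul_smul, inv_mul_cancel₀ hτ0.ne', one_smul]
  rw [key, norm_smul, Real.norm_eq_abs, abs_of_pos (inv_pos.mpr hτ0)]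
  calc τ⁻¹ * ‖Jint sys τ v - τ • v‖ ≤ τ⁻¹ * (ε/2 * |τ - 0|) := by
        exact mul_le_mul_of_nonneg_left hbound (inv_pos.mpr hτ0).le
    _ = ε/2 := by
        rw [sub_zero, abs_of_pos hτ0]
        field_simp
    _ < ε := half_lt_self hε

end

end BIBO16

namespace BIBO16

open MeasureTheory Set Filter

noncomputable section

set_option linter.unusedSectionVars false

variable {X Xm1 Y : Type*}
    [NormedAddCommGroup X] [NormedSpace ℂ X] [CompleteSpace X]
    [NormedAddCommGroup Xm1] [NormedSpace ℂ Xm1] [CompleteSpace Xm1]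
    [NormedAddCommGroup Y] [NormedSpace ℂ Y] [CompleteSpace Y]
    (sys : SystemNode X X Xm1 Y)

/-- The domain of the generator, as a submodule of `X`. -/
def D : Submodule ℂ X where
  carrier := {x : X | ∃ z : X, sys.Am1 x = sys.ι z}
  add_mem' := by
    rintro a b ⟨za, ha⟩ ⟨zb, hb⟩
    exact ⟨za + zb, by rw [map_add, ha, hb, map_add]⟩
  zero_mem' := ⟨0, by simp⟩
  smul_mem' := by
    rintro c x ⟨z, hz⟩
    exact ⟨c • z, by rw [_root_.map_smul, hz, _root_.map_smul]⟩

lemma mem_D_iff {x : X} : x ∈ D sys ↔ ∃ z : X, sys.Am1 x = sys.ι z := Iff.rfl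

lemma Jint_mem_D (v : X) {t : ℝ} (ht : 0 ≤ t) : Jint sys t v ∈ D sys :=
  ⟨Tn sys t v - v, Am1_Jint sys v ht⟩

lemma T_mem_D {z : X} (hz : z ∈ D sys) {t : ℝ} (ht : 0 ≤ t) : sys.S.T t z ∈ D sys := by
  obtain ⟨w, hw⟩ := hz
  exact ⟨sys.S.T t w, commute_aux sys hw ht⟩

lemma Cop_sub {a b : X} (ha : a ∈ D sys) (hb : b ∈ D sys) :
    sys.Cop (a - b) = sys.Cop a - sys.Cop b := by
  have h := sys.Cop_add (a - b) b ((D sys).sub_mem ha hb) hb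
  rw [sub_add_cancel] at h
  rw [h]
  abel

/-- The graph-norm continuity of `Cop` along convergent nets in the graph. -/
lemma copTendsto {ι' : Type*} {l : Filter ι'} {f g : ι' → X} {a b : X}
    (hf : Tendsto f l (nhds a)) (hg : Tendsto g l (nhds b))
    (hmem : ∀ᶠ i in l, sys.Am1 (f i) = sys.ι (g i))
    (hab : sys.Am1 a = sys.ι b) :
    Tendsto (fun i => sys.Cop (f i)) l (nhds (sys.Cop a)) := by
  obtain ⟨M₀, hM₀⟩ := sys.Cop_bound
  have hM : ∀ x z : X, sys.Am1 x = sys.ι z → ‖sys.Cop x‖ ≤ |M₀| * (‖x‖ + ‖z‖) := by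
    intro x z hxz
    exact (hM₀ x z hxz).trans (mul_le_mul_of_nonneg_right (le_abs_self M₀)
      (by positivity))
  rw [tendsto_iff_norm_sub_tendsto_zero]
  have key : ∀ᶠ i in l, ‖sys.Cop (f i) - sys.Cop a‖ ≤ |M₀| * (‖f i - a‖ + ‖g i - b‖) := by
    filter_upwards [hmem] with i hi
    have hfi : f i ∈ D sys := ⟨g i, hi⟩
    have haD : a ∈ D sys := ⟨b, hab⟩
    rw [← Cop_sub sys hfi haD]
    exact hM (f i - a) (g i - b) (by rw [map_sub, map_sub, hi, hab])
  have hlim : Tendsto (fun i => |M₀| * (‖f i - a‖ + ‖g i - b‖)) l (nhds 0) := by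
    have h1 := tendsto_iff_norm_sub_tendsto_zero.mp hf
    have h2 := tendsto_iff_norm_sub_tendsto_zero.mp hg
    have := (h1.add h2).const_mul |M₀|
    simpa using this
  exact squeeze_zero' (Eventually.of_forall (fun i => norm_nonneg _)) key hlim

end

end BIBO16

namespace BIBO16

open MeasureTheory Set Filter

noncomputable section

set_option linter.unusedSectionVars false

variable {X Xm1 Y : Type*}
    [NormedAddCommGroup X] [NormedSpace ℂ X] [CompleteSpace X]
    [NormedAddCommGroup Xm1] [NormedSpace ℂ Xm1] [CompleteSpace Xm1]
    [NormedAddCommGroup Y] [NormedSpace ℂ Y] [CompleteSpace Y]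
    (sys : SystemNode X X Xm1 Y)

lemma hbeta : sys.S.growthBound < (sys.betaPt).re := by
  rw [SystemNode.betaPt]
  simp only [Complex.ofReal_re]
  exact lt_add_one _

lemma R_mem_D (hB : ∀ x : X, sys.B x = sys.ι x) (v : X) :
    sys.R sys.betaPt (sys.B v) ∈ D sys := by
  refine ⟨sys.betaPt • sys.R sys.betaPt (sys.B v) - v, ?_⟩
  have h := sys.R_right sys.betaPt (hbeta sys) (sys.B v)
  rw [hB] at h
  rw [hB, map_sub, _root_.map_smul]
  set r := sys.R sys.betaPt (sys.ι v) with hr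
  rw [← h]
  abel

lemma smul_mem_D (t : ℝ) {z w : X} (hzw : sys.Am1 z = sys.ι w) (τ : ℝ) :
    sys.Am1 (τ • Tn sys t z) = sys.ι (τ • Tn sys t w) := by
  rw [ContinuousLinearMap.map_smul_of_tower, commute sys hzw t,
    ContinuousLinearMap.map_smul_of_tower]

lemma CD_of_mem (hB : ∀ x : X, sys.B x = sys.ι x)
    (hG : ∀ s : ℂ, sys.S.growthBound < s.re → ∀ x : X,
      sys.G s x = sys.Cop (sys.R s (sys.ι x)))
    {x : X} (u : X) (hx : x ∈ D sys) : sys.CD x u = sys.Cop x := by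
  have hR := R_mem_D sys hB u
  rw [SystemNode.CD, hG sys.betaPt (hbeta sys) u, ← hB]
  rw [← sys.Cop_add (x - sys.R sys.betaPt (sys.B u)) (sys.R sys.betaPt (sys.B u))
    ((D sys).sub_mem hx hR) hR, sub_add_cancel]

lemma classical_sol (hB : ∀ x : X, sys.B x = sys.ι x)
    (hG : ∀ s : ℂ, sys.S.growthBound < s.re → ∀ x : X,
      sys.G s x = sys.Cop (sys.R s (sys.ι x)))
    {z w : X} (hzw : sys.Am1 z = sys.ι w) :
    sys.IsClassicalSolution (fun τ => Tn sys τ z) (fun τ => τ • Tn sys τ z)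
      (fun τ => sys.CD (τ • Tn sys τ z) (Tn sys τ z)) ∧
    ∀ t : ℝ, 0 ≤ t →
      sys.CD (t • Tn sys t z) (Tn sys t z) = (t : ℂ) • sys.Cop (sys.S.T t z) := by
  have memx : ∀ τ : ℝ, (τ • Tn sys τ z) ∈ D sys :=
    fun τ => ⟨τ • Tn sys τ w, smul_mem_D sys τ hzw τ⟩
  have hyeq : ∀ τ : ℝ, sys.CD (τ • Tn sys τ z) (Tn sys τ z) = sys.Cop (τ • Tn sys τ z) :=
    fun τ => CD_of_mem sys hB hG _ (memx τ)
  constructor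
  · refine ⟨(Tn_cont sys z).continuousOn, ?_, ?_, fun t _ => rfl⟩
    · -- continuity of the output
      intro t _
      have h1 : Tendsto (fun τ : ℝ => τ • Tn sys τ z) (nhdsWithin t (Ici 0))
          (nhds (t • Tn sys t z)) :=
        ((continuous_id.smul (Tn_cont sys z)).continuousAt).continuousWithinAt
      have h2 : Tendsto (fun τ : ℝ => τ • Tn sys τ w) (nhdsWithin t (Ici 0))
          (nhds (t • Tn sys t w)) :=
        ((continuous_id.smul (Tn_cont sys w)).continuousAt).continuousWithinAt
      have h3 := copTendsto sys h1 h2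
        (Eventually.of_forall (fun τ => smul_mem_D sys τ hzw τ))
        (smul_mem_D sys t hzw t)
      have : ContinuousWithinAt (fun τ : ℝ => sys.Cop (τ • Tn sys τ z)) (Ici 0) t := h3
      exact this.congr (fun τ _ => hyeq τ) (hyeq t)
    · -- the derivative data
      refine ⟨fun τ => τ • Tn sys τ w + Tn sys τ z, ?_, ?_, ?_⟩
      · exact ((continuous_id.smul (Tn_cont sys w)).add (Tn_cont sys z)).continuousOn
      · intro t ht
        have h := ((hasDerivAt_id t).hasDerivWithinAt).smul (derivT sys hzw ht)
        exact h.congr_deriv (by simp)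
      · intro t ht
        rw [hB, smul_mem_D sys t hzw t, ← map_add]
  · intro t ht
    rw [hyeq t, show (t : ℝ) • Tn sys t z = (t : ℂ) • Tn sys t z from rfl,
      sys.Cop_smul (t : ℂ) (Tn sys t z) ⟨Tn sys t w, commute sys hzw t⟩,
      Tn_of_nonneg sys ht]

end

end BIBO16

/-- Proposition 6.4: let `A` generate a semigroup with `T(t)`
right-invertible (for some, equivalently each, `t > 0`) and let `C` be an observation
operator such that the system node `Σ(A, 𝕀, C, C(·-A)⁻¹)` (identity input operator,
transfer function `C(s-A)⁻¹`) satisfies a BIBO-type estimate for all classical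
solutions with zero initial state.  Then `C` extends to a bounded operator `X → Y`. -/
theorem bibo_identity_input_implies_bounded_observation
    {X Xm1 Y : Type*}
    [NormedAddCommGroup X] [NormedSpace ℂ X] [CompleteSpace X]
    [NormedAddCommGroup Xm1] [NormedSpace ℂ Xm1] [CompleteSpace Xm1]
    [NormedAddCommGroup Y] [NormedSpace ℂ Y] [CompleteSpace Y]
    (sys : SystemNode X X Xm1 Y)
    -- the input operator is the identity `𝕀 : X → X`:
    (hB : ∀ x : X, sys.B x = sys.ι x)
    -- the transfer function is `G(s) = C (s - A)⁻¹`: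
    (hG : ∀ s : ℂ, sys.S.growthBound < s.re → ∀ x : X,
      sys.G s x = sys.Cop (sys.R s (sys.ι x)))
    -- `T(t)` is right-invertible in `L(X)` for some `t > 0`:
    (hrinv : ∃ t : ℝ, 0 < t ∧ ∃ Rt : X →L[ℂ] X,
      (sys.S.T t).comp Rt = ContinuousLinearMap.id ℂ X)
    -- the BIBO-type estimate for classical solutions with zero initial state:
    (hbibo : ∃ c : ℝ, 0 < c ∧ ∀ (u : ℝ → X) (x : ℝ → X) (y : ℝ → Y),
      sys.IsClassicalSolution u x y → x 0 = 0 →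
      ∀ T : ℝ, 0 < T → ∀ M : ℝ, (∀ s ∈ Set.Icc (0:ℝ) T, ‖u s‖ ≤ M) →
        ∀ t ∈ Set.Icc (0:ℝ) T, ‖y t‖ ≤ c * M) :
    ∃ Cb : X →L[ℂ] Y, ∀ x z : X, sys.Am1 x = sys.ι z → Cb x = sys.Cop x := by
  classical
  obtain ⟨t₀, ht₀, Rt, hRt⟩ := hrinv
  obtain ⟨c, hc, hb⟩ := hbibo
  -- a uniform bound for the semigroup on `[0, t₀]`, via Banach–Steinhaus
  obtain ⟨C', hC'⟩ : ∃ C', ∀ i : Set.Icc (0:ℝ) t₀, ‖sys.S.T i‖ ≤ C' := by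
    apply banach_steinhaus
    intro x
    obtain ⟨C, hC⟩ := (isCompact_Icc : IsCompact (Set.Icc (0:ℝ) t₀)).exists_bound_of_continuousOn
      ((sys.S.strongly_continuous x).mono (fun s hs => hs.1))
    exact ⟨C, fun i => hC i i.2⟩
  set Mns := max C' 0 with hMnsdef
  have hMnsb : ∀ s ∈ Set.Icc (0:ℝ) t₀, ∀ v : X, ‖sys.S.T s v‖ ≤ Mns * ‖v‖ := by
    intro s hs v
    exact ((sys.S.T s).le_opNorm v).trans
      (mul_le_mul_of_nonneg_right ((hC' ⟨s, hs⟩).trans (le_max_left _ _)) (norm_nonneg v))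
  set K₀ := c * Mns / t₀ with hK₀def
  -- key estimate: `‖C T(t₀) z‖ ≤ K₀ ‖z‖` for `z` in the domain of `A`
  have keybound : ∀ z ∈ BIBO16.D sys, ‖sys.Cop (sys.S.T t₀ z)‖ ≤ K₀ * ‖z‖ := by
    intro z hz
    obtain ⟨w, hw⟩ := hz
    obtain ⟨hsol, hval⟩ := BIBO16.classical_sol sys hB hG hw
    have hx0 : (fun τ : ℝ => τ • BIBO16.Tn sys τ z) 0 = 0 := by simp
    have hin : ∀ s ∈ Set.Icc (0:ℝ) t₀, ‖BIBO16.Tn sys s z‖ ≤ Mns * ‖z‖ := by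
      intro s hs
      rw [BIBO16.Tn_of_nonneg sys hs.1]
      exact hMnsb s hs z
    have hy := hb _ _ _ hsol hx0 t₀ ht₀ (Mns * ‖z‖) hin t₀ ⟨ht₀.le, le_rfl⟩
    rw [hval t₀ ht₀.le, norm_smul, Complex.norm_real, Real.norm_eq_abs,
      abs_of_pos ht₀] at hy
    rw [hK₀def, div_mul_eq_mul_div, le_div_iff₀ ht₀]
    calc ‖sys.Cop (sys.S.T t₀ z)‖ * t₀ = t₀ * ‖sys.Cop (sys.S.T t₀ z)‖ := mul_comm _ _
      _ ≤ c * (Mns * ‖z‖) := hy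
      _ = c * Mns * ‖z‖ := by ring
  -- the bounded operator `C T(t₀)` on the domain of `A`
  have memT : ∀ z : BIBO16.D sys, sys.S.T t₀ (z : X) ∈ BIBO16.D sys :=
    fun z => BIBO16.T_mem_D sys z.2 ht₀.le
  let flin : BIBO16.D sys →ₗ[ℂ] Y :=
  { toFun := fun z => sys.Cop (sys.S.T t₀ (z : X))
    map_add' := fun a b => by
      have h := sys.Cop_add (sys.S.T t₀ (a : X)) (sys.S.T t₀ (b : X)) (memT a) (memT b)
      rw [← map_add] at h
      simpa using h
    map_smul' := fun m a => by
      have h := sys.Cop_smul m (sys.S.T t₀ (a : X)) (memT a)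
      rw [← _root_.map_smul] at h
      simpa using h }
  let fC : BIBO16.D sys →L[ℂ] Y :=
    flin.mkContinuous K₀ (fun z => keybound (z : X) z.2)
  -- density of the domain
  have hdenseset : Dense ((BIBO16.D sys : Set X)) := by
    intro x
    refine mem_closure_of_tendsto (BIBO16.avg_tendsto sys x) ?_
    filter_upwards [self_mem_nhdsWithin] with τ (hτ : τ ∈ Set.Ioi (0:ℝ))
    exact (BIBO16.D sys).smul_of_tower_mem τ⁻¹ (BIBO16.Jint_mem_D sys x (le_of_lt hτ))
  have hdense : DenseRange ((BIBO16.D sys).subtypeL) := by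
    simpa [DenseRange, Subtype.range_val] using hdenseset
  have he : IsUniformInducing ((BIBO16.D sys).subtypeL) :=
    isUniformEmbedding_subtype_val.isUniformInducing
  -- extension to all of `X` and composition with the right inverse
  let K := fC.extend ((BIBO16.D sys).subtypeL)
  refine ⟨K.comp Rt, ?_⟩
  intro x zx hx
  have hRtapp : sys.S.T t₀ (Rt x) = x := by
    have h := ContinuousLinearMap.ext_iff.mp hRt x
    simpa using h
  haveI : (nhdsWithin (0:ℝ) (Set.Ioi 0)).NeBot := nhdsGT_neBot 0
  have h1 : Filter.Tendsto (fun τ : ℝ => τ⁻¹ • BIBO16.Jint sys τ (Rt x))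
      (nhdsWithin 0 (Set.Ioi 0)) (nhds (Rt x)) := BIBO16.avg_tendsto sys (Rt x)
  have h2 : Filter.Tendsto (fun τ : ℝ => K (τ⁻¹ • BIBO16.Jint sys τ (Rt x)))
      (nhdsWithin 0 (Set.Ioi 0)) (nhds (K (Rt x))) := (K.continuous.tendsto _).comp h1
  have h3 : ∀ τ : ℝ, 0 < τ → K (τ⁻¹ • BIBO16.Jint sys τ (Rt x)) =
      sys.Cop (sys.S.T t₀ (τ⁻¹ • BIBO16.Jint sys τ (Rt x))) := by
    intro τ hτ
    have hmem : τ⁻¹ • BIBO16.Jint sys τ (Rt x) ∈ BIBO16.D sys :=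
      (BIBO16.D sys).smul_of_tower_mem τ⁻¹ (BIBO16.Jint_mem_D sys (Rt x) hτ.le)
    exact ContinuousLinearMap.extend_eq fC hdense he ⟨_, hmem⟩
  have h4 : ∀ τ : ℝ, 0 < τ → sys.S.T t₀ (τ⁻¹ • BIBO16.Jint sys τ (Rt x)) =
      τ⁻¹ • BIBO16.Jint sys τ x := by
    intro τ hτ
    rw [ContinuousLinearMap.map_smul_of_tower]
    congr 1
    rw [BIBO16.Jint, BIBO16.Jint, ← (sys.S.T t₀).intervalIntegral_comp_comm
      ((BIBO16.Tn_cont sys (Rt x)).intervalIntegrable 0 τ)]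
    refine intervalIntegral.integral_congr (fun s _ => ?_)
    show sys.S.T t₀ (sys.S.T (max s 0) (Rt x)) = sys.S.T (max s 0) x
    rw [← ContinuousLinearMap.comp_apply, ← sys.S.map_add t₀ (max s 0) ht₀.le (le_max_right _ _),
      add_comm, sys.S.map_add (max s 0) t₀ (le_max_right _ _) ht₀.le,
      ContinuousLinearMap.comp_apply, hRtapp]
  have h5 : Filter.Tendsto (fun τ : ℝ => sys.Cop (τ⁻¹ • BIBO16.Jint sys τ x))
      (nhdsWithin 0 (Set.Ioi 0)) (nhds (sys.Cop x)) := by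
    refine BIBO16.copTendsto sys (BIBO16.avg_tendsto sys x) (BIBO16.avg_tendsto sys zx) ?_ hx
    filter_upwards [self_mem_nhdsWithin] with τ (hτ : τ ∈ Set.Ioi (0:ℝ))
    have hJ : BIBO16.Jint sys τ zx = BIBO16.Tn sys τ x - x := by
      rw [BIBO16.Tz_eq sys hx (le_of_lt hτ)]
      abel
    rw [ContinuousLinearMap.map_smul_of_tower, ContinuousLinearMap.map_smul_of_tower,
      BIBO16.Am1_Jint sys x (le_of_lt hτ), hJ]
  have h6 : Filter.Tendsto (fun τ : ℝ => sys.Cop (τ⁻¹ • BIBO16.Jint sys τ x))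
      (nhdsWithin 0 (Set.Ioi 0)) (nhds (K (Rt x))) := by
    refine Filter.Tendsto.congr' ?_ h2
    filter_upwards [self_mem_nhdsWithin] with τ (hτ : τ ∈ Set.Ioi (0:ℝ))
    rw [h3 τ hτ, h4 τ hτ]
  have hfin := tendsto_nhds_unique h6 h5
  show (K.comp Rt) x = sys.Cop x
  rw [ContinuousLinearMap.comp_apply]
  exact hfin
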